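/- arXiv:2502.19601 — 3 statements merged into one kernel-verified Lean document; each statement's English description precedes it below -/
import Mathlib

section
/- For every real ξ ≥ 2, ∑_{k > ξ} 2^{ω(k)} σ(k) / (k^2 φ(k)) ≪ (log ξ)/ξ, where the sum is over integers k > ξ. -/
/-!
Since `σ(k) φ(k) ≤ k²` and `φ(k) = k ∏_{p ∣ k} (1 - 1/p)`, the summand is at most
`k⁻² ∏_{p ∣ k} (2 + 16/p)`, and expanding this product twice over squarefree divisors bounds it
by `k⁻² (w * 1 * 1)(k)` with `w(t) = μ²(t) ∏_{p ∣ t} 16/p`. Interchanging the sums, the tail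
over `k > ξ` becomes `∑_t w(t) t⁻² ∑_{um > ξ/t} (um)⁻²`. Summing the tails of `∑ m⁻²` over `u`
produces a harmonic sum, so the inner sum is `≪ t (1 + log ξ) / ξ`; and `∑_t w(t) / t`
converges because `w(t) ≪ t^{-1/2}`.
-/

open Finset ArithmeticFunction Real
open scoped ENNReal ArithmeticFunction.zeta ArithmeticFunction.sigma

section SquarefreeProd

variable {R : Type*} [CommSemiring R]

def squarefreeProd (c : ℕ → R) : ArithmeticFunction R :=
  ⟨fun n => if Squarefree n then ∏ p ∈ n.primeFactors, c p else 0, by simp⟩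

lemma squarefreeProd_apply (c : ℕ → R) (n : ℕ) :
    squarefreeProd c n = if Squarefree n then ∏ p ∈ n.primeFactors, c p else 0 := rfl

lemma squarefreeProd_nonneg [PartialOrder R] [IsOrderedRing R] {c : ℕ → R}
    (hc : ∀ p, 0 ≤ c p) (n : ℕ) : 0 ≤ squarefreeProd c n := by
  rw [squarefreeProd_apply]
  split_ifs
  · exact prod_nonneg fun p _ => hc p
  · exact le_rfl

lemma prod_primeFactors_one_add (c : ℕ → R) {n : ℕ} (hn : n ≠ 0) :
    ∏ p ∈ n.primeFactors, (1 + c p) = ∑ d ∈ n.divisors, squarefreeProd c d := by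
  classical
  simp only [squarefreeProd_apply, add_comm (1 : R)]
  rw [← sum_filter, Nat.sum_divisors_filter_squarefree hn, Nat.factors_eq,
    List.toFinset_coe, Nat.toFinset_factors, prod_add]
  refine sum_congr rfl fun s hs => ?_
  have hprime : ∀ p ∈ s, p.Prime := fun p hp =>
    Nat.prime_of_mem_primeFactors (mem_powerset.mp hs hp)
  rw [prod_const_one, mul_one, prod_val, Function.id_def, Nat.primeFactors_prod hprime]

lemma prod_primeFactors_two_add_le [PartialOrder R] [IsOrderedRing R] {c : ℕ → R}
    (hc : ∀ p, 0 ≤ c p) {n : ℕ} (hn : n ≠ 0) :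
    ∏ p ∈ n.primeFactors, (2 + c p) ≤ (squarefreeProd c * (ζ * ζ)) n := by
  calc ∏ p ∈ n.primeFactors, (2 + c p) = ∏ p ∈ n.primeFactors, (1 + (1 + c p)) := by
        simp only [← add_assoc, one_add_one_eq_two]
    _ = ∑ d ∈ n.divisors, squarefreeProd (fun p => 1 + c p) d := prod_primeFactors_one_add _ hn
    _ ≤ ∑ d ∈ n.divisors, ∑ t ∈ d.divisors, squarefreeProd c t := by
        refine sum_le_sum fun d _ => ?_
        rw [squarefreeProd_apply]
        split_ifs with hd
        · exact (prod_primeFactors_one_add c hd.ne_zero).le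
        · exact sum_nonneg fun t _ => squarefreeProd_nonneg hc t
    _ = (squarefreeProd c * (ζ * ζ)) n := by
        rw [mul_comm, mul_assoc, coe_zeta_mul_apply]
        simp only [coe_zeta_mul_apply]

end SquarefreeProd

lemma sigma_one_mul_totient_le (n : ℕ) : σ 1 n * n.totient ≤ n ^ 2 := by
  induction n using Nat.recOnPosPrimePosCoprime with
  | prime_pow p a hp ha =>
    rw [sigma_one_apply_prime_pow hp, Nat.totient_prime_pow hp ha]
    calc (∑ i ∈ range (a + 1), p ^ i) * (p ^ (a - 1) * (p - 1))
        = p ^ (a - 1) * ((∑ i ∈ range (a + 1), p ^ i) * (p - 1)) := by ring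
      _ = p ^ (a - 1) * (p ^ (a + 1) - 1) := by rw [geom_sum_mul_of_one_le hp.one_lt.le]
      _ ≤ p ^ (a - 1) * p ^ (a + 1) := by gcongr; exact Nat.sub_le _ _
      _ = (p ^ a) ^ 2 := by rw [← pow_add, ← pow_mul]; congr 1; omega
  | zero => simp
  | one => simp
  | coprime a b _ _ hab iha ihb =>
    rw [isMultiplicative_sigma.map_mul_of_coprime hab, Nat.totient_mul hab, mul_pow]
    calc σ 1 a * σ 1 b * (a.totient * b.totient)
        = (σ 1 a * a.totient) * (σ 1 b * b.totient) := by ring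
      _ ≤ a ^ 2 * b ^ 2 := Nat.mul_le_mul iha ihb

lemma totient_eq_mul_prod_one_sub_inv (n : ℕ) :
    (n.totient : ℝ) = n * ∏ p ∈ n.primeFactors, (1 - (p : ℝ)⁻¹) := by
  simpa using congrArg (Rat.cast : ℚ → ℝ) (Nat.totient_eq_mul_prod_factors n)

lemma two_div_one_sub_inv_sq_le {p : ℝ} (hp : 2 ≤ p) : 2 / (1 - p⁻¹) ^ 2 ≤ 2 + 16 / p := by
  have hp' : 0 < 1 - p⁻¹ := by
    rw [sub_pos]; exact inv_lt_one_of_one_lt₀ (by linarith)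
  rw [div_le_iff₀ (by positivity)]
  field_simp
  nlinarith [sq_nonneg (p - 2)]

lemma two_pow_card_mul_sigma_div_le {k : ℕ} (hk : k ≠ 0) :
    (2 : ℝ) ^ k.primeFactors.card * (σ 1 k : ℝ) / ((k : ℝ) ^ 2 * k.totient) ≤
      (squarefreeProd (fun p : ℕ => (16 : ℝ) / p) * (ζ * ζ)) k / (k : ℝ) ^ 2 := by
  have hφ : (0 : ℝ) < k.totient := by exact_mod_cast Nat.totient_pos.mpr (Nat.pos_of_ne_zero hk)
  have hσ : (σ 1 k : ℝ) ≤ (k : ℝ) ^ 2 / k.totient := by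
    rw [le_div_iff₀ hφ]; exact_mod_cast sigma_one_mul_totient_le k
  calc (2 : ℝ) ^ k.primeFactors.card * (σ 1 k : ℝ) / ((k : ℝ) ^ 2 * k.totient)
      ≤ (2 : ℝ) ^ k.primeFactors.card * ((k : ℝ) ^ 2 / k.totient) /
          ((k : ℝ) ^ 2 * k.totient) := by
        gcongr
    _ = (∏ p ∈ k.primeFactors, (2 / (1 - (p : ℝ)⁻¹) ^ 2)) / (k : ℝ) ^ 2 := by
        rw [prod_div_distrib, prod_const, prod_pow, totient_eq_mul_prod_one_sub_inv]
        have : (k : ℝ) ≠ 0 := by exact_mod_cast hk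
        field_simp
    _ ≤ (∏ p ∈ k.primeFactors, (2 + 16 / (p : ℝ))) / (k : ℝ) ^ 2 := by
        gcongr with p hp
        exact two_div_one_sub_inv_sq_le
          (by exact_mod_cast (Nat.prime_of_mem_primeFactors hp).two_le)
    _ ≤ _ := by gcongr; exact prod_primeFactors_two_add_le (fun p => by positivity) hk

lemma prod_div_sqrt_le {c : ℝ} (hc : 1 ≤ c) {S : Finset ℕ} (hS : 0 ∉ S) :
    ∏ n ∈ S, c / √n ≤ c ^ ⌈c ^ 2⌉₊ := by
  set N := ⌈c ^ 2⌉₊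
  have hsmall : ∏ n ∈ S with n < N, c / √n ≤ c ^ N :=
    calc ∏ n ∈ S with n < N, c / √n ≤ ∏ n ∈ S with n < N, c := by
          refine prod_le_prod (fun n _ => by positivity) fun n hn => div_le_self (by positivity) ?_
          have : n ≠ 0 := fun h => hS (h ▸ (mem_filter.mp hn).1)
          exact one_le_sqrt.mpr (by exact_mod_cast Nat.one_le_iff_ne_zero.mpr this)
      _ ≤ c ^ N := by
          rw [prod_const]
          refine pow_le_pow_right₀ hc ((card_le_card fun n hn => ?_).trans (card_range N).le)
          exact mem_range.mpr (mem_filter.mp hn).2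
  have hlarge : ∏ n ∈ S with ¬n < N, c / √n ≤ 1 := by
    refine prod_le_one (fun n _ => by positivity) fun n hn => div_le_one_of_le₀ ?_ (by positivity)
    refine le_sqrt_of_sq_le ((Nat.le_ceil _).trans ?_)
    exact_mod_cast not_lt.mp (mem_filter.mp hn).2
  rw [← prod_filter_mul_prod_filter_not S (· < N)]
  simpa using mul_le_mul hsmall hlarge (by positivity) (by positivity)

lemma squarefreeProd_div_le {c : ℝ} (hc : 1 ≤ c) (t : ℕ) :
    squarefreeProd (fun p => c / p) t / t ≤ c ^ ⌈c ^ 2⌉₊ * (1 / (t : ℝ) ^ (3 / 2 : ℝ)) := by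
  rw [squarefreeProd_apply]
  split_ifs with ht
  swap; · rw [zero_div]; positivity
  have ht' : (0 : ℝ) < t := by exact_mod_cast Nat.pos_of_ne_zero ht.ne_zero
  have hprod : (t : ℝ) = ∏ p ∈ t.primeFactors, (p : ℝ) := by
    rw [← Nat.cast_prod, Nat.prod_primeFactors_of_squarefree ht]
  have hsqrt : ((t : ℝ) ^ (3 / 2 : ℝ)) = t * √t := by
    rw [show (3 / 2 : ℝ) = 1 + 1 / 2 by norm_num, rpow_add ht', rpow_one, ← sqrt_eq_rpow]
  have hkey : (∏ p ∈ t.primeFactors, c / p) * √t = ∏ p ∈ t.primeFactors, c / √p := by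
    rw [hprod, sqrt_prod _ fun p _ => by positivity, ← prod_mul_distrib]
    refine prod_congr rfl fun p hp => ?_
    have : (0 : ℝ) < p := by exact_mod_cast (Nat.prime_of_mem_primeFactors hp).pos
    rw [div_mul_eq_mul_div, div_eq_div_iff this.ne' (by positivity), mul_assoc,
      mul_self_sqrt this.le]
  rw [hsqrt, mul_one_div, le_div_iff₀ (by positivity)]
  calc (∏ p ∈ t.primeFactors, c / p) / t * (t * √t)
        = (∏ p ∈ t.primeFactors, c / p) * √t := by field_simp
    _ ≤ c ^ ⌈c ^ 2⌉₊ := hkey ▸ prod_div_sqrt_le hc (by simp)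

lemma summable_squarefreeProd_div {c : ℝ} (hc : 1 ≤ c) :
    Summable fun t : ℕ => squarefreeProd (fun p => c / p) t / t := by
  have hc' : ∀ p : ℕ, 0 ≤ c / p := fun p => div_nonneg (zero_le_one.trans hc) p.cast_nonneg
  exact .of_nonneg_of_le (fun t => div_nonneg (squarefreeProd_nonneg hc' t) t.cast_nonneg)
    (squarefreeProd_div_le hc) ((summable_one_div_nat_rpow.mpr (by norm_num)).mul_left _)

lemma ENNReal.tsum_mul_sum_divisorsAntidiagonal {g : ℕ → ℝ≥0∞} (hg : g 0 = 0)
    (f : ℕ × ℕ → ℝ≥0∞) :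
    ∑' n, g n * ∑ x ∈ n.divisorsAntidiagonal, f x =
      ∑' x : ℕ × ℕ, g (x.1 * x.2) * f x := by
  rw [← ENNReal.tsum_fiberwise _ fun x : ℕ × ℕ => x.1 * x.2]
  refine tsum_congr fun n => ?_
  rcases eq_or_ne n 0 with rfl | hn
  · rw [Nat.divisorsAntidiagonal_zero, sum_empty, mul_zero, eq_comm]
    refine ENNReal.tsum_eq_zero.mpr fun x => ?_
    rw [show (x : ℕ × ℕ).1 * (x : ℕ × ℕ).2 = 0 from x.2, hg, zero_mul]
  have hfiber : (fun x : ℕ × ℕ => x.1 * x.2) ⁻¹' {n} = ↑n.divisorsAntidiagonal := by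
    ext x; simp [hn]
  rw [hfiber, Finset.tsum_subtype' (f := fun x : ℕ × ℕ => g (x.1 * x.2) * f x), mul_sum]
  refine sum_congr rfl fun x hx => ?_
  rw [(Nat.mem_divisorsAntidiagonal.mp hx).1]

/-- Valued in `ℝ≥0∞` so that it can be rearranged without summability side conditions. -/
noncomputable def invSqTail (f : ℕ → ℝ) (y : ℝ) : ℝ≥0∞ :=
  ∑' n : ℕ, ENNReal.ofReal (if y < n then f n / n ^ 2 else 0)

lemma invSqTail_mul {f g : ArithmeticFunction ℝ} (hf : ∀ n, 0 ≤ f n) (hg : ∀ n, 0 ≤ g n)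
    (y : ℝ) :
    invSqTail ⇑(f * g) y = ∑' a : ℕ, ENNReal.ofReal (f a / a ^ 2) * invSqTail g (y / a) := by
  have hsplit : ∀ n : ℕ, ENNReal.ofReal (if y < n then (f * g) n / n ^ 2 else 0) =
      ENNReal.ofReal (if y < n then 1 / n ^ 2 else 0) *
        ∑ x ∈ n.divisorsAntidiagonal, ENNReal.ofReal (f x.1 * g x.2) := by
    intro n
    rw [← ENNReal.ofReal_sum_of_nonneg fun x _ => mul_nonneg (hf _) (hg _),
      ← ENNReal.ofReal_mul (by positivity), ← mul_apply]
    split_ifs <;> simp [div_eq_inv_mul]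
  simp only [invSqTail, hsplit]
  rw [ENNReal.tsum_mul_sum_divisorsAntidiagonal (by simp), ENNReal.tsum_prod']
  refine tsum_congr fun a => ?_
  rcases eq_or_ne a 0 with rfl | ha
  · simp
  have ha' : (0 : ℝ) < a := by positivity
  rw [← ENNReal.tsum_mul_left]
  refine tsum_congr fun b => ?_
  rw [← ENNReal.ofReal_mul (by positivity), ← ENNReal.ofReal_mul (by have := hf a; positivity)]
  simp only [Nat.cast_mul, div_lt_iff₀' ha']
  split_ifs
  · field_simp
  · simp

lemma zeta_div_sq (n : ℕ) : (ζ : ArithmeticFunction ℝ) n / n ^ 2 = ((n : ℝ) ^ 2)⁻¹ := by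
  rcases eq_or_ne n 0 with rfl | hn <;> simp [*]

lemma invSqTail_zeta_le {y : ℝ} (hy : 0 ≤ y) :
    invSqTail (ζ : ArithmeticFunction ℝ) y ≤ ENNReal.ofReal (2 / (⌊y⌋₊ + 1)) := by
  simp only [invSqTail, zeta_div_sq]
  refine ENNReal.tsum_le_of_sum_range_le fun N => ?_
  rw [← ENNReal.ofReal_sum_of_nonneg fun n _ => by split_ifs <;> positivity]
  refine ENNReal.ofReal_le_ofReal (le_of_eq_of_le ?_ (sum_Ioo_inv_sq_le _ N))
  rw [← sum_filter]
  congr 1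
  ext n
  simp [Nat.floor_lt hy, and_comm]

lemma harmonic_floor_le_one_add_posLog {y : ℝ} (hy : 0 ≤ y) :
    (harmonic ⌊y⌋₊ : ℝ) ≤ 1 + log⁺ y := by
  calc (harmonic ⌊y⌋₊ : ℝ) ≤ 1 + Real.log ⌊y⌋₊ := harmonic_le_one_add_log _
    _ = 1 + log⁺ ⌊y⌋₊ := by rw [← Real.log_of_nat_eq_posLog]
    _ ≤ 1 + log⁺ y := by gcongr; exact Nat.floor_le hy

lemma tsum_ofReal_two_div_mul_eq_harmonic {y : ℝ} (hy : 0 < y) :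
    ∑' u : ℕ, ENNReal.ofReal (if (u : ℝ) ≤ y then 2 / (y * u) else 0)
      = ENNReal.ofReal (2 * harmonic ⌊y⌋₊ / y) := by
  rw [tsum_eq_sum (s := range (⌊y⌋₊ + 1)) fun u hu => ?_]
  · rw [← ENNReal.ofReal_sum_of_nonneg fun u _ => by split_ifs <;> positivity]
    congr 1
    have hle : ∀ u ∈ range (⌊y⌋₊ + 1), (u : ℝ) ≤ y := fun u hu =>
      (Nat.le_floor_iff hy.le).mp (Nat.lt_succ_iff.mp (mem_range.mp hu))
    rw [sum_congr rfl fun u hu => if_pos (hle u hu), sum_range_succ', harmonic]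
    push_cast
    rw [mul_zero, div_zero, add_zero, mul_sum, sum_div]
    exact sum_congr rfl fun u _ => by field_simp
  · rw [mem_range, not_lt, Nat.succ_le_iff, Nat.floor_lt hy.le] at hu
    rw [if_neg (not_le.mpr hu), ENNReal.ofReal_zero]

lemma inv_sq_mul_two_div_floor_le {y : ℝ} (hy : 0 < y) (u : ℕ) :
    ((u : ℝ) ^ 2)⁻¹ * (2 / (⌊y / u⌋₊ + 1)) ≤
      (if (u : ℝ) ≤ y then 2 / (y * u) else 0) +
        2 * (if y < u then ((u : ℝ) ^ 2)⁻¹ else 0) := by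
  rcases eq_or_ne u 0 with rfl | hu
  · simp
  have hfloor : y / u < ⌊y / u⌋₊ + 1 := Nat.lt_floor_add_one _
  by_cases h : (u : ℝ) ≤ y
  · rw [if_pos h, if_neg (not_lt.mpr h)]
    calc ((u : ℝ) ^ 2)⁻¹ * (2 / (⌊y / u⌋₊ + 1))
        ≤ ((u : ℝ) ^ 2)⁻¹ * (2 / (y / u)) := by gcongr
      _ = 2 / (y * u) + 2 * 0 := by field_simp; ring
  · rw [if_neg h, if_pos (not_le.mp h)]
    calc ((u : ℝ) ^ 2)⁻¹ * (2 / (⌊y / u⌋₊ + 1)) ≤ ((u : ℝ) ^ 2)⁻¹ * 2 := by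
          gcongr
          exact div_le_self zero_le_two (by simp)
      _ = 0 + 2 * ((u : ℝ) ^ 2)⁻¹ := by ring

lemma zeta_nonneg (n : ℕ) : 0 ≤ (ζ : ArithmeticFunction ℝ) n := by
  rw [natCoe_apply]; positivity

lemma invSqTail_zeta_mul_zeta_le {y : ℝ} (hy : 0 < y) :
    invSqTail ⇑((ζ : ArithmeticFunction ℝ) * ζ) y ≤
      ENNReal.ofReal (2 * (3 + log⁺ y) / y) := by
  have hterm : ∀ u : ℕ, ENNReal.ofReal (((u : ℝ) ^ 2)⁻¹) *
      invSqTail (ζ : ArithmeticFunction ℝ) (y / u) ≤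
      ENNReal.ofReal (if (u : ℝ) ≤ y then 2 / (y * u) else 0) +
        2 * ENNReal.ofReal (if y < u then ((u : ℝ) ^ 2)⁻¹ else 0) := by
    intro u
    calc _ ≤ ENNReal.ofReal (((u : ℝ) ^ 2)⁻¹) * ENNReal.ofReal (2 / (⌊y / u⌋₊ + 1)) :=
          by gcongr; exact invSqTail_zeta_le (by positivity)
      _ ≤ _ := by
        rw [← ENNReal.ofReal_mul (by positivity), ← ENNReal.ofReal_ofNat 2,
          ← ENNReal.ofReal_mul zero_le_two]
        exact (ENNReal.ofReal_le_ofReal (inv_sq_mul_two_div_floor_le hy u)).trans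
          ENNReal.ofReal_add_le
  calc invSqTail ⇑((ζ : ArithmeticFunction ℝ) * ζ) y
      ≤ ∑' u : ℕ, (ENNReal.ofReal (if (u : ℝ) ≤ y then 2 / (y * u) else 0) +
        2 * ENNReal.ofReal (if y < u then ((u : ℝ) ^ 2)⁻¹ else 0)) := by
        rw [invSqTail_mul zeta_nonneg zeta_nonneg]
        simp only [zeta_div_sq]
        exact ENNReal.tsum_le_tsum hterm
    _ = ENNReal.ofReal (2 * harmonic ⌊y⌋₊ / y) +
          2 * invSqTail (ζ : ArithmeticFunction ℝ) y := by
        simp only [ENNReal.tsum_add, ENNReal.tsum_mul_left,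
          tsum_ofReal_two_div_mul_eq_harmonic hy, invSqTail, zeta_div_sq]
    _ ≤ ENNReal.ofReal (2 * (1 + log⁺ y) / y) + 2 * ENNReal.ofReal (2 / y) := by
        gcongr
        · exact harmonic_floor_le_one_add_posLog hy.le
        · refine (invSqTail_zeta_le hy.le).trans (ENNReal.ofReal_le_ofReal ?_)
          exact div_le_div_of_nonneg_left zero_le_two hy (Nat.lt_floor_add_one y).le
    _ = ENNReal.ofReal (2 * (3 + log⁺ y) / y) := by
        rw [← ENNReal.ofReal_ofNat 2, ← ENNReal.ofReal_mul zero_le_two,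
          ← ENNReal.ofReal_add (by have := posLog_nonneg (x := y); positivity) (by positivity)]
        congr 1
        ring

lemma invSqTail_mul_zeta_mul_zeta_le {f : ArithmeticFunction ℝ} (hf : ∀ n, 0 ≤ f n)
    (hsum : Summable fun t : ℕ => f t / t) {ξ : ℝ} (hξ : 1 ≤ ξ) :
    invSqTail ⇑(f * (ζ * ζ)) ξ ≤
      ENNReal.ofReal ((∑' t : ℕ, f t / t) * (2 * (3 + log ξ) / ξ)) := by
  have hζζ : ∀ n, 0 ≤ ((ζ : ArithmeticFunction ℝ) * ζ) n := fun n => by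
    rw [coe_zeta_mul_apply]; exact sum_nonneg fun d _ => zeta_nonneg d
  have hf' : ∀ t : ℕ, 0 ≤ f t / t := fun t => div_nonneg (hf t) t.cast_nonneg
  rw [invSqTail_mul hf hζζ, ENNReal.ofReal_mul (tsum_nonneg hf'),
    ENNReal.ofReal_tsum_of_nonneg hf' hsum, ← ENNReal.tsum_mul_right]
  refine ENNReal.tsum_le_tsum fun t => ?_
  rcases eq_or_ne t 0 with rfl | ht
  · simp
  have ht' : (1 : ℝ) ≤ t := by exact_mod_cast Nat.one_le_iff_ne_zero.mpr ht
  have hlog : log⁺ (ξ / t) ≤ log ξ := by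
    rw [← posLog_eq_log (by rwa [abs_of_nonneg (by positivity)])]
    exact posLog_le_posLog (by positivity) (div_le_self (by positivity) ht')
  have := hf t
  calc _ ≤ ENNReal.ofReal (f t / t ^ 2) *
          ENNReal.ofReal (2 * (3 + log⁺ (ξ / t)) / (ξ / t)) := by
        gcongr; exact invSqTail_zeta_mul_zeta_le (by positivity)
    _ ≤ ENNReal.ofReal (f t / t) * ENNReal.ofReal (2 * (3 + log ξ) / ξ) := by
        rw [← ENNReal.ofReal_mul (by positivity), ← ENNReal.ofReal_mul (by positivity)]
        refine ENNReal.ofReal_le_ofReal ?_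
        calc f t / t ^ 2 * (2 * (3 + log⁺ (ξ / t)) / (ξ / t))
            = f t / t * (2 * (3 + log⁺ (ξ / t)) / ξ) := by field_simp
          _ ≤ f t / t * (2 * (3 + log ξ) / ξ) := by gcongr

lemma tsum_le_of_tsum_ofReal_le {ι : Type*} {f : ι → ℝ} (hf : ∀ i, 0 ≤ f i) {B : ℝ}
    (hB : 0 ≤ B) (h : ∑' i, ENNReal.ofReal (f i) ≤ ENNReal.ofReal B) : ∑' i, f i ≤ B :=
  Real.tsum_le_of_sum_le hf fun s => by
    rw [← ENNReal.ofReal_le_ofReal_iff hB, ENNReal.ofReal_sum_of_nonneg fun i _ => hf i]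
    exact (ENNReal.sum_le_tsum s).trans h

/-- For every `ξ ≥ 2`, `∑_{k > ξ} 2^{ω(k)} σ(k) / (k² φ(k)) ≪ (log ξ)/ξ`. -/
theorem stmt_5 : ∃ C : ℝ, 0 < C ∧ ∀ ξ : ℝ, 2 ≤ ξ →
    (∑' k : ℕ, if ξ < (k : ℝ) then
        (2 : ℝ) ^ k.primeFactors.card * ((ArithmeticFunction.sigma 1) k : ℝ)
          / ((k : ℝ) ^ 2 * (Nat.totient k : ℝ))
      else 0)
      ≤ C * Real.log ξ / ξ := by
  set w := squarefreeProd fun p : ℕ => (16 : ℝ) / p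
  have hw : ∀ n, 0 ≤ w n := squarefreeProd_nonneg fun p => by positivity
  have hsum : Summable fun t : ℕ => w t / t := summable_squarefreeProd_div (by norm_num)
  set K := ∑' t : ℕ, w t / t
  have hK : 0 < K :=
    hsum.tsum_pos (fun t => div_nonneg (hw t) t.cast_nonneg) 1 (by simp [w, squarefreeProd_apply])
  refine ⟨2 * (3 / Real.log 2 + 1) * K, by positivity, fun ξ hξ => ?_⟩
  have hlogξ : 0 < log ξ := log_pos (by linarith)
  have hlog : 1 ≤ log ξ / Real.log 2 :=
    (one_le_div (log_pos one_lt_two)).mpr (log_le_log two_pos hξ)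
  refine tsum_le_of_tsum_ofReal_le (fun k => by split_ifs <;> positivity) (by positivity) ?_
  calc _ ≤ invSqTail ⇑(w * (ζ * ζ)) ξ := by
        refine ENNReal.tsum_le_tsum fun k => ENNReal.ofReal_le_ofReal ?_
        split_ifs with hk
        · exact two_pow_card_mul_sigma_div_le (by rintro rfl; simp at hk; linarith)
        · exact le_rfl
    _ ≤ ENNReal.ofReal (K * (2 * (3 + log ξ) / ξ)) :=
        invSqTail_mul_zeta_mul_zeta_le hw hsum (by linarith)
    _ ≤ ENNReal.ofReal (2 * (3 / Real.log 2 + 1) * K * log ξ / ξ) := by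
        refine ENNReal.ofReal_le_ofReal ?_
        calc K * (2 * (3 + log ξ) / ξ) = 2 * K * (3 * 1 + log ξ) / ξ := by ring
          _ ≤ 2 * K * (3 * (log ξ / Real.log 2) + log ξ) / ξ := by gcongr
          _ = 2 * (3 / Real.log 2 + 1) * K * log ξ / ξ := by ring
end

section
/- Let a be a positive rational number, not a perfect power, with squarefree kernel s(a), and let ℓ, m be positive integers. If the rational number β > 0 satisfies β = γ^ℓ for some γ ∈ ℚ(ζ_{mℓ}) and ℓ is odd, then β = c^ℓ for some rational c. -/
open Polynomial IntermediateField Module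

section Key

variable {K : Type*} [Field K] [Algebra ℚ K] [FiniteDimensional ℚ K] [IsGalois ℚ K]

/-- If the Galois group is abelian and `β` is a `p`-th power in `K` (`p` odd prime,
`K` containing a primitive `p`-th root of unity), then `β` is a `p`-th power in `ℚ`. -/
lemma key_prime (hcomm : ∀ σ τ : K ≃ₐ[ℚ] K, σ * τ = τ * σ)
    {p : ℕ} (hp : p.Prime) (hp2 : p ≠ 2) {ζ : K} (hζ : IsPrimitiveRoot ζ p)
    {β : ℚ} (hβ0 : β ≠ 0) {δ : K} (hδ : δ ^ p = algebraMap ℚ K β) :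
    ∃ b : ℚ, β = b ^ p := by
  by_contra hcon
  push_neg at hcon
  have hirr : Irreducible (X ^ p - C β) :=
    X_pow_sub_C_irreducible_of_prime hp (fun b => fun h => hcon b h.symm)
  have hδroot : (Polynomial.aeval δ) (X ^ p - C β) = 0 := by
    simp [hδ]
  have hmin : minpoly ℚ δ = X ^ p - C β :=
    (minpoly.eq_of_irreducible_of_monic hirr hδroot
      (monic_X_pow_sub_C β hp.ne_zero)).symm
  have hδ0 : δ ≠ 0 := by
    intro h
    rw [h, zero_pow hp.ne_zero] at hδ
    exact hβ0 ((_root_.map_eq_zero (algebraMap ℚ K)).mp hδ.symm)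
  -- there is an automorphism sending δ to ζ * δ
  have hζδroot : (Polynomial.aeval (ζ * δ)) (minpoly ℚ δ) = 0 := by
    rw [hmin]
    simp [mul_pow, hζ.pow_eq_one, hδ]
  obtain ⟨σ, hσ⟩ := minpoly.exists_algEquiv_of_root' (Algebra.IsAlgebraic.isAlgebraic δ) hζδroot
  -- every automorphism fixing δ fixes ζ
  have hfix : ∀ τ : K ≃ₐ[ℚ] K, τ δ = δ → τ ζ = ζ := by
    intro τ hτ
    have h1 : τ (σ δ) = σ (τ δ) := by
      have := hcomm τ σ
      calc τ (σ δ) = (τ * σ) δ := rfl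
        _ = (σ * τ) δ := by rw [this]
        _ = σ (τ δ) := rfl
    rw [hτ, hσ, map_mul, hτ] at h1
    exact mul_right_cancel₀ hδ0 h1
  -- hence ζ lies in ℚ⟮δ⟯ by the Galois correspondence
  have hζmem : ζ ∈ ℚ⟮δ⟯ := by
    rw [← IsGalois.fixedField_fixingSubgroup ℚ⟮δ⟯]
    intro g
    exact hfix g.1 (g.2 ⟨δ, mem_adjoin_simple_self ℚ δ⟩)
  have hle : ℚ⟮ζ⟯ ≤ ℚ⟮δ⟯ := by
    rw [adjoin_simple_le_iff]
    exact hζmem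
  -- degrees
  have hδdeg : finrank ℚ ℚ⟮δ⟯ = p := by
    rw [adjoin.finrank (Algebra.IsIntegral.isIntegral δ), hmin, natDegree_X_pow_sub_C]
  haveI : CharZero K := charZero_of_injective_algebraMap (algebraMap ℚ K).injective
  have hζdeg : finrank ℚ ℚ⟮ζ⟯ = p - 1 := by
    have hcyc := cyclotomic_eq_minpoly_rat hζ hp.pos
    have h2 : minpoly ℚ ζ = cyclotomic p ℚ := by
      convert hcyc.symm using 2
      exact Subsingleton.elim _ _
    rw [adjoin.finrank (Algebra.IsIntegral.isIntegral ζ), h2, natDegree_cyclotomic,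
      Nat.totient_prime hp]
  have hdvd : finrank ℚ ℚ⟮ζ⟯ ∣ finrank ℚ ℚ⟮δ⟯ :=
    Dvd.intro _ (IntermediateField.finrank_bot_mul_relfinrank hle)
  rw [hζdeg, hδdeg] at hdvd
  have h3 : 3 ≤ p := by
    have h2 := hp.two_le
    omega
  have hd1 : p - 1 ∣ 1 := by
    have := Nat.dvd_sub hdvd (dvd_refl (p - 1))
    simpa [Nat.sub_sub_self (by omega : 1 ≤ p)] using this
  have := Nat.le_of_dvd one_pos hd1
  omega

/-- Strong induction: odd `ℓ`-th powers. -/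
lemma key_aux (hcomm : ∀ σ τ : K ≃ₐ[ℚ] K, σ * τ = τ * σ) :
    ∀ ℓ : ℕ, Odd ℓ → 0 < ℓ → ∀ ζ : K, IsPrimitiveRoot ζ ℓ → ∀ β : ℚ, 0 < β →
      ∀ γ : K, γ ^ ℓ = algebraMap ℚ K β → ∃ c : ℚ, β = c ^ ℓ := by
  intro ℓ
  induction ℓ using Nat.strong_induction_on with
  | _ ℓ ih =>
    intro hodd hpos ζ hζ β hβ γ hγ
    rcases eq_or_lt_of_le (Nat.one_le_iff_ne_zero.mpr hpos.ne') with h1 | h1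
    · exact ⟨β, by rw [← h1, pow_one]⟩
    -- ℓ > 1 : take p = minFac
    have hp : ℓ.minFac.Prime := Nat.minFac_prime (by omega)
    set p := ℓ.minFac with hpdef
    have hpdvd : p ∣ ℓ := Nat.minFac_dvd ℓ
    obtain ⟨k, hk⟩ := hpdvd
    have hk0 : 0 < k := by
      rcases Nat.eq_zero_or_pos k with h | h
      · rw [h, mul_zero] at hk; omega
      · exact h
    have hkodd : Odd k := by
      rcases Nat.even_or_odd k with h | h
      · exfalso; exact (Nat.not_odd_iff_even.mpr (hk ▸ h.mul_left p)) hodd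
      · exact h
    have hpodd : p ≠ 2 := by
      intro h
      rw [h] at hk
      exact (Nat.not_odd_iff_even.mpr ⟨k, by omega⟩) hodd
    have hklt : k < ℓ := by
      have := hp.two_le
      have h2 : 2 * k ≤ p * k := Nat.mul_le_mul_right k hp.two_le
      omega
    -- ζ ^ k is a primitive p-th root, ζ ^ p a primitive k-th root
    have hζp : IsPrimitiveRoot (ζ ^ k) p := by
      have := hζ.pow_of_dvd hk0.ne' ⟨p, by rw [hk, mul_comm]⟩
      rwa [hk, mul_comm p k, Nat.mul_div_cancel_left p hk0] at this
    have hζk : IsPrimitiveRoot (ζ ^ p) k := by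
      have := hζ.pow_of_dvd hp.ne_zero ⟨k, hk⟩
      rwa [hk, Nat.mul_div_cancel_left k hp.pos] at this
    -- β is a p-th power
    have hδ : (γ ^ k) ^ p = algebraMap ℚ K β := by
      rw [← pow_mul, mul_comm k p, ← hk, hγ]
    obtain ⟨b, hb⟩ := key_prime hcomm hp hpodd hζp hβ.ne' hδ
    have hbpos : 0 < b := by
      rcases lt_trichotomy b 0 with h | h | h
      · exfalso
        have hpodd' : Odd p := hp.odd_of_ne_two hpodd
        have : b ^ p < 0 := hpodd'.pow_neg h
        rw [← hb] at this
        linarith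
      · exfalso; rw [hb, h, zero_pow hp.ne_zero] at hβ; exact lt_irrefl 0 hβ
      · exact h
    -- γ^k / b is a p-th root of unity
    have hb0 : (algebraMap ℚ K) b ≠ 0 :=
      (_root_.map_ne_zero (algebraMap ℚ K)).mpr hbpos.ne'
    have hη : (γ ^ k * (algebraMap ℚ K b)⁻¹) ^ p = 1 := by
      rw [mul_pow, hδ, inv_pow, ← map_pow, ← hb]
      exact mul_inv_cancel₀ ((_root_.map_ne_zero (algebraMap ℚ K)).mpr hβ.ne')
    haveI : NeZero p := ⟨hp.ne_zero⟩
    obtain ⟨j, hjlt, hj⟩ := hζp.eq_pow_of_pow_eq_one hη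
    -- adjust γ by a root of unity
    have hγ1 : (γ * ((ζ ^ j)⁻¹)) ^ k = algebraMap ℚ K b := by
      have hζj : γ ^ k = ((ζ ^ k) ^ j) * algebraMap ℚ K b := by
        rw [hj, inv_mul_cancel_right₀ hb0]
      have hz : (ζ ^ j) ^ k = (ζ ^ k) ^ j := by rw [← pow_mul, ← pow_mul, mul_comm]
      have hzne : (ζ ^ k) ^ j ≠ 0 := pow_ne_zero _ (pow_ne_zero _ (hζ.ne_zero hpos.ne'))
      calc (γ * (ζ ^ j)⁻¹) ^ k = γ ^ k * ((ζ ^ j) ^ k)⁻¹ := by rw [mul_pow, inv_pow]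
        _ = ((ζ ^ k) ^ j * algebraMap ℚ K b) * ((ζ ^ k) ^ j)⁻¹ := by rw [← hζj, hz]
        _ = algebraMap ℚ K b := by
            rw [mul_comm ((ζ ^ k) ^ j) _, mul_assoc, mul_inv_cancel₀ hzne, mul_one]
    obtain ⟨c, hc⟩ := ih k hklt hkodd hk0 (ζ ^ p) hζk b hbpos _ hγ1
    exact ⟨c, by rw [hb, hc, ← pow_mul, mul_comm k p, ← hk]⟩

end Key

/-- (First case of the generalized Schinzel lemma.) If a positive rational `β` is an
`ℓ`-th power of an element of the cyclotomic field `ℚ(ζ_{mℓ})` and `ℓ` is odd, then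
`β` is an `ℓ`-th power of a rational number. -/
theorem stmt_7 (m ℓ : ℕ+) (hl : Odd (ℓ : ℕ)) (β : ℚ) (hβ : 0 < β)
    (γ : CyclotomicField (m * ℓ) ℚ)
    (hγ : γ ^ (ℓ : ℕ) = algebraMap ℚ (CyclotomicField (m * ℓ) ℚ) β) :
    ∃ c : ℚ, β = c ^ (ℓ : ℕ) := by
  haveI : IsCyclotomicExtension {(m : ℕ) * ℓ} ℚ (CyclotomicField ((m : ℕ) * ℓ) ℚ) := by
    haveI : NeZero (((m : ℕ) * ℓ : ℕ) : ℚ) := ⟨by positivity⟩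
    exact CyclotomicField.isCyclotomicExtension _ _
  haveI : FiniteDimensional ℚ (CyclotomicField (m * ℓ) ℚ) :=
    IsCyclotomicExtension.finiteDimensional {(m : ℕ) * ℓ} ℚ _
  haveI : IsGalois ℚ (CyclotomicField (m * ℓ) ℚ) := IsCyclotomicExtension.isGalois {(m : ℕ) * ℓ} ℚ _
  have hcomm : ∀ σ τ : (CyclotomicField (m * ℓ) ℚ) ≃ₐ[ℚ] (CyclotomicField (m * ℓ) ℚ),
      σ * τ = τ * σ := by
    intro σ τ
    have hirr : Irreducible (Polynomial.cyclotomic ((m : ℕ) * ℓ) ℚ) :=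
      Polynomial.cyclotomic.irreducible_rat (by positivity)
    have e := IsCyclotomicExtension.autEquivPow (CyclotomicField (m * ℓ) ℚ) hirr
    apply e.injective
    rw [map_mul, map_mul]
    exact mul_comm _ _
  have hζ := IsCyclotomicExtension.zeta_spec ((m : ℕ) * ℓ) ℚ (CyclotomicField (m * ℓ) ℚ)
  have hζℓ : IsPrimitiveRoot
      ((IsCyclotomicExtension.zeta ((m : ℕ) * ℓ) ℚ (CyclotomicField (m * ℓ) ℚ)) ^ (m : ℕ)) (ℓ : ℕ) := by
    have h := hζ.pow_of_dvd (m.pos).ne'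
      (⟨(ℓ : ℕ), rfl⟩ : (m : ℕ) ∣ (m : ℕ) * ℓ)
    convert h using 1
    rw [Nat.mul_div_cancel_left _ m.pos]
  exact key_aux hcomm ℓ hl ℓ.pos _ hζℓ β hβ γ hγ
end

section
/- Fix z ∈ ℂ with |z| ≤ 1 and a positive integer h. Define the multiplicative-sum S(n) = ∑_{ℓ ≥ 1, n | ℓ} μ(ℓ)^2 (z-1)^{ω(ℓ)} gcd(ℓ,h)/(ℓ φ(ℓ)) for squarefree n. Then S(n) = (z-1)^{ω(n)} · (gcd(n,h)/(n φ(n))) · ∏_{q prime, q ∤ n} (1 + (z-1) gcd(q,h)/(q(q-1))). -/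
/-!
Write `w ℓ` for the summand. It is multiplicative and vanishes off the squarefree numbers, so
`w (n * m)` is `w n * w m` when `m` is coprime to `n` and `0` otherwise. The sum over the multiples
of `n` is therefore `w n` times the sum of `w` over the integers coprime to `n`, and the Euler
product turns the latter into `∏_{q ∤ n} (1 + w q)`.

The Euler product needs absolute convergence: `|w ℓ| ≤ h 2^{ω(ℓ)} / (ℓ φ(ℓ))`, and for squarefree
`ℓ` we have `2^{ω(ℓ)} √ℓ / φ(ℓ) = ∏_{p ∣ ℓ} 2√p / (p - 1)`, whose factors are at most `1` once
`p ≥ 6`; hence `|w ℓ| = O(ℓ^{-3/2})`.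
-/

open Finset
open scoped Nat

theorem Finset.prod_le_prod_max_one {ι : Type*} (s t : Finset ι) {x : ι → ℝ}
    (hx₀ : ∀ i, 0 ≤ x i) (hx₁ : ∀ i ∉ t, x i ≤ 1) :
    ∏ i ∈ s, x i ≤ ∏ i ∈ t, max (x i) 1 := by
  classical
  calc ∏ i ∈ s, x i ≤ ∏ i ∈ s, if i ∈ t then max (x i) 1 else 1 := by
        refine prod_le_prod (fun i _ => hx₀ i) fun i _ => ?_
        split_ifs with hi
        · exact le_max_left _ _
        · exact hx₁ i hi
    _ = ∏ i ∈ s ∩ t, max (x i) 1 := prod_ite_mem s t _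
    _ ≤ ∏ i ∈ t, max (x i) 1 :=
        prod_le_prod_of_subset_of_one_le inter_subset_right
          (fun _ _ => zero_le_one.trans (le_max_right _ _)) fun _ _ _ => le_max_right _ _

theorem Nat.totient_eq_prod_sub_one_of_squarefree {n : ℕ} (hn : Squarefree n) :
    φ n = ∏ p ∈ n.primeFactors, (p - 1) := by
  rw [totient_eq_div_primeFactors_mul, prod_primeFactors_of_squarefree hn,
    Nat.div_self (Nat.pos_of_ne_zero hn.ne_zero), one_mul]

theorem Real.two_mul_sqrt_le_sub_one {x : ℝ} (hx : 6 ≤ x) : 2 * √x ≤ x - 1 := by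
  have hs := Real.sq_sqrt (by linarith : (0 : ℝ) ≤ x)
  nlinarith [Real.sqrt_nonneg x, sq_nonneg (√x - 5 / 2)]

theorem exists_two_pow_card_primeFactors_mul_sqrt_le_mul_totient :
    ∃ C : ℝ, ∀ ℓ : ℕ, Squarefree ℓ → 2 ^ ℓ.primeFactors.card * √ℓ ≤ C * φ ℓ := by
  set x : ℕ → ℝ := fun p => 2 * √p / (p - 1 : ℕ)
  refine ⟨∏ p ∈ range 6, max (x p) 1, fun ℓ hℓ => ?_⟩
  have hx : ∀ p ∈ ℓ.primeFactors, 2 * √p = x p * (p - 1 : ℕ) := fun p hp => by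
    have hp₂ := (Nat.prime_of_mem_primeFactors hp).two_le
    have hp₁ : ((p - 1 : ℕ) : ℝ) ≠ 0 := by exact_mod_cast (by omega : p - 1 ≠ 0)
    simp only [x]
    field_simp
  calc (2 : ℝ) ^ ℓ.primeFactors.card * √ℓ = ∏ p ∈ ℓ.primeFactors, 2 * √p := by
        rw [prod_mul_distrib, prod_const, ← Real.sqrt_prod _ (fun _ _ => Nat.cast_nonneg _),
          ← Nat.cast_prod, Nat.prod_primeFactors_of_squarefree hℓ]
    _ = (∏ p ∈ ℓ.primeFactors, x p) * φ ℓ := by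
        rw [prod_congr rfl hx, prod_mul_distrib, Nat.totient_eq_prod_sub_one_of_squarefree hℓ,
          Nat.cast_prod]
    _ ≤ (∏ p ∈ range 6, max (x p) 1) * φ ℓ := by
        gcongr
        refine prod_le_prod_max_one _ _ (fun p => by positivity) fun p hp => ?_
        have hp : 6 ≤ p := by simpa using hp
        refine div_le_one_of_le₀ ?_ (Nat.cast_nonneg _)
        rw [Nat.cast_sub (by omega), Nat.cast_one]
        exact Real.two_mul_sqrt_le_sub_one (by exact_mod_cast hp)

theorem tsum_ite_dvd_eq_tsum_mul {M : Type*} [AddCommMonoid M] [TopologicalSpace M]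
    (f : ℕ → M) {n : ℕ} (hn : n ≠ 0) :
    ∑' ℓ, (if n ∣ ℓ then f ℓ else 0) = ∑' m, f (n * m) := by
  refine ((mul_right_injective₀ hn).tsum_eq fun ℓ hℓ => ?_).symm.trans
    (tsum_congr fun m => if_pos (dvd_mul_right n m))
  by_contra hℓn
  exact hℓ (if_neg fun ⟨m, hm⟩ => hℓn ⟨m, hm.symm⟩)

namespace ArithmeticFunction

variable {R : Type*}

def restrictCoprime [Zero R] (f : ArithmeticFunction R) (n : ℕ) : ArithmeticFunction R :=
  ⟨fun m => if m.Coprime n then f m else 0, by simp⟩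

theorem restrictCoprime_apply [Zero R] (f : ArithmeticFunction R) (n m : ℕ) :
    f.restrictCoprime n m = if m.Coprime n then f m else 0 := rfl

theorem IsMultiplicative.restrictCoprime [MonoidWithZero R] {f : ArithmeticFunction R}
    (hf : f.IsMultiplicative) (n : ℕ) : (f.restrictCoprime n).IsMultiplicative := by
  refine ⟨by simp [restrictCoprime_apply, hf.map_one], fun {a b} hab => ?_⟩
  simp only [restrictCoprime_apply, Nat.coprime_mul_iff_left]
  split_ifs <;> simp_all [hf.map_mul_of_coprime hab]

variable [NormedCommRing R] [CompleteSpace R]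

theorem IsMultiplicative.tsum_apply_mul_eq_mul_tprod {f : ArithmeticFunction R}
    (hf : f.IsMultiplicative) (hf_sq : ∀ m, ¬ Squarefree m → f m = 0)
    (hsum : Summable (‖f ·‖)) (n : ℕ) :
    ∑' m, f (n * m) = f n * ∏' p : {p : ℕ // p.Prime ∧ ¬ p ∣ n}, (1 + f p) := by
  set g := f.restrictCoprime n
  have hmul : ∀ m, f (n * m) = f n * g m := fun m => by
    by_cases hm : m.Coprime n
    · rw [hf.map_mul_of_coprime hm.symm, restrictCoprime_apply, if_pos hm]
    · rw [restrictCoprime_apply, if_neg hm, mul_zero,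
        hf_sq _ fun h => hm (Nat.squarefree_mul_iff.mp h).1.symm]
  have hg_sum : Summable (‖g ·‖) := hsum.of_nonneg_of_le (fun _ => norm_nonneg _) fun m => by
    rw [restrictCoprime_apply]; split_ifs <;> simp
  have hg_prime_pow : ∀ p : Nat.Primes, ∑' e, g ((p : ℕ) ^ e) = 1 + g p := fun p => by
    rw [tsum_eq_sum (s := range 2), sum_range_succ, sum_range_one, pow_zero, pow_one,
      (hf.restrictCoprime n).map_one]
    intro e he
    have he : 1 < e := by simpa using he
    rw [restrictCoprime_apply, ite_eq_right_iff]
    refine fun _ => hf_sq _ fun h => ?_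
    have := (Nat.squarefree_pow_iff p.prop.ne_one (by omega)).mp h
    omega
  have hsupp : Function.mulSupport (fun p : Nat.Primes => 1 + g p) ⊆
      Set.range (fun p : {p : ℕ // p.Prime ∧ ¬ p ∣ n} => (⟨p, p.prop.1⟩ : Nat.Primes)) := by
    intro p hp
    by_cases hpn : (p : ℕ) ∣ n
    · refine absurd ?_ hp
      simp [g, restrictCoprime_apply, (Nat.Prime.coprime_iff_not_dvd p.prop).not_left.mpr hpn]
    · exact ⟨⟨p, p.prop, hpn⟩, rfl⟩
  calc ∑' m, f (n * m) = f n * ∑' m, g m := by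
        simp only [hmul, hg_sum.of_norm.tsum_mul_left]
    _ = f n * ∏' p : Nat.Primes, (1 + g p) := by
        rw [← (hf.restrictCoprime n).eulerProduct_tprod hg_sum, tprod_congr hg_prime_pow]
    _ = f n * ∏' p : {p : ℕ // p.Prime ∧ ¬ p ∣ n}, (1 + f p) := by
        have hinj : Function.Injective
            (fun p : {p : ℕ // p.Prime ∧ ¬ p ∣ n} => (⟨p, p.prop.1⟩ : Nat.Primes)) :=
          fun _ _ h => Subtype.ext (congrArg (fun r : Nat.Primes => (r : ℕ)) h)
        refine congrArg _ ((hinj.tprod_eq hsupp).symm.trans (tprod_congr fun p => ?_))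
        exact congrArg _ <| if_pos ((Nat.Prime.coprime_iff_not_dvd p.prop.1).mpr p.prop.2)

end ArithmeticFunction

open ArithmeticFunction
open scoped ArithmeticFunction.Moebius

noncomputable def squarefreeWeight (z : ℂ) (h : ℕ) : ArithmeticFunction ℂ :=
  ⟨fun ℓ => (μ ℓ : ℂ) ^ 2 * (z - 1) ^ ℓ.primeFactors.card * (ℓ.gcd h : ℂ) / ((ℓ : ℂ) * (φ ℓ : ℂ)),
    by simp⟩

section squarefreeWeight

variable (z : ℂ) (h : ℕ)

theorem squarefreeWeight_apply (ℓ : ℕ) : squarefreeWeight z h ℓ =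
    (μ ℓ : ℂ) ^ 2 * (z - 1) ^ ℓ.primeFactors.card * (ℓ.gcd h : ℂ) / ((ℓ : ℂ) * (φ ℓ : ℂ)) := rfl

theorem isMultiplicative_squarefreeWeight : (squarefreeWeight z h).IsMultiplicative := by
  refine ⟨by simp [squarefreeWeight_apply], fun {a b} hab => ?_⟩
  rw [squarefreeWeight_apply, isMultiplicative_moebius.map_mul_of_coprime hab,
    hab.primeFactors_mul, card_union_of_disjoint hab.disjoint_primeFactors, Nat.gcd_comm,
    hab.gcd_mul, Nat.gcd_comm h, Nat.gcd_comm h, Nat.totient_mul hab, squarefreeWeight_apply,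
    squarefreeWeight_apply]
  push_cast
  ring

theorem squarefreeWeight_eq_zero_of_not_squarefree {ℓ : ℕ} (hℓ : ¬ Squarefree ℓ) :
    squarefreeWeight z h ℓ = 0 := by
  simp [squarefreeWeight_apply, moebius_eq_zero_of_not_squarefree hℓ]

theorem squarefreeWeight_of_squarefree {ℓ : ℕ} (hℓ : Squarefree ℓ) :
    squarefreeWeight z h ℓ =
      (z - 1) ^ ℓ.primeFactors.card * (ℓ.gcd h : ℂ) / ((ℓ : ℂ) * (φ ℓ : ℂ)) := by
  rw [squarefreeWeight_apply, ← Int.cast_pow, moebius_sq_eq_one_of_squarefree hℓ, Int.cast_one,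
    one_mul]

theorem squarefreeWeight_prime {q : ℕ} (hq : q.Prime) :
    squarefreeWeight z h q = (z - 1) * (q.gcd h : ℂ) / ((q : ℂ) * ((q : ℂ) - 1)) := by
  rw [squarefreeWeight_of_squarefree z h hq.squarefree, hq.primeFactors, card_singleton, pow_one,
    Nat.totient_prime hq, Nat.cast_sub hq.one_le, Nat.cast_one]

theorem summable_norm_squarefreeWeight (hz : ‖z‖ ≤ 1) (hh : 0 < h) :
    Summable (‖squarefreeWeight z h ·‖) := by
  obtain ⟨C, hC⟩ := exists_two_pow_card_primeFactors_mul_sqrt_le_mul_totient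
  have hsum := (Real.summable_nat_rpow_inv.mpr (by norm_num : (1 : ℝ) < 3 / 2)).mul_left (h * C)
  refine hsum.of_nonneg_of_le (fun _ => norm_nonneg _) fun ℓ => ?_
  have hC₀ : 0 ≤ C := zero_le_one.trans (by simpa using hC 1 squarefree_one)
  by_cases hℓ : Squarefree ℓ
  swap
  · rw [squarefreeWeight_eq_zero_of_not_squarefree z h hℓ, norm_zero]
    positivity
  have hℓ₀ : (0 : ℝ) < ℓ := by exact_mod_cast Nat.pos_of_ne_zero hℓ.ne_zero
  have hφ₀ : (0 : ℝ) < φ ℓ := by exact_mod_cast Nat.totient_pos.mpr (Nat.pos_of_ne_zero hℓ.ne_zero)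
  have hz₁ : ‖z - 1‖ ≤ 2 := (norm_sub_le z 1).trans (by rw [norm_one]; linarith)
  have hgcd : ((ℓ.gcd h : ℕ) : ℝ) ≤ h := by exact_mod_cast Nat.le_of_dvd hh (Nat.gcd_dvd_right ℓ h)
  have hpow : (ℓ : ℝ) ^ (3 / 2 : ℝ) = ℓ * √ℓ := by
    rw [show (3 / 2 : ℝ) = 1 + 1 / 2 by norm_num, Real.rpow_add hℓ₀, Real.rpow_one,
      Real.sqrt_eq_rpow]
  calc ‖squarefreeWeight z h ℓ‖
      = ‖z - 1‖ ^ ℓ.primeFactors.card * (ℓ.gcd h : ℝ) / (ℓ * φ ℓ) := by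
        rw [squarefreeWeight_of_squarefree z h hℓ]
        simp
    _ ≤ 2 ^ ℓ.primeFactors.card * h / (ℓ * φ ℓ) := by gcongr
    _ ≤ h * C * ((ℓ : ℝ) ^ (3 / 2 : ℝ))⁻¹ := by
        rw [hpow, div_le_iff₀ (by positivity)]
        field_simp
        exact hC ℓ hℓ

end squarefreeWeight

/-- For `|z| ≤ 1`, `h ≥ 1` and squarefree `n`,
`∑_{ℓ ≥ 1, n ∣ ℓ} μ(ℓ)² (z-1)^{ω(ℓ)} gcd(ℓ,h)/(ℓ φ(ℓ))
  = (z-1)^{ω(n)} (gcd(n,h)/(n φ(n))) ∏_{q prime, q ∤ n} (1 + (z-1) gcd(q,h)/(q(q-1)))`. -/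
theorem stmt_8 (z : ℂ) (hz : ‖z‖ ≤ 1) (h : ℕ) (hh : 0 < h) (n : ℕ) (hn : Squarefree n) :
    (∑' ℓ : ℕ, if n ∣ ℓ then
        (ArithmeticFunction.moebius ℓ : ℂ) ^ 2 * (z - 1) ^ ℓ.primeFactors.card
          * (Nat.gcd ℓ h : ℂ) / ((ℓ : ℂ) * (Nat.totient ℓ : ℂ))
      else 0)
    = (z - 1) ^ n.primeFactors.card * (Nat.gcd n h : ℂ) / ((n : ℂ) * (Nat.totient n : ℂ))
      * ∏' q : {q : ℕ // q.Prime ∧ ¬ q ∣ n},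
          (1 + (z - 1) * (Nat.gcd (q : ℕ) h : ℂ) / (((q : ℕ) : ℂ) * (((q : ℕ) : ℂ) - 1))) := by
  have hfactor (q : {q : ℕ // q.Prime ∧ ¬ q ∣ n}) :
      1 + (z - 1) * (Nat.gcd (q : ℕ) h : ℂ) / (((q : ℕ) : ℂ) * (((q : ℕ) : ℂ) - 1)) =
        1 + squarefreeWeight z h q := by
    rw [squarefreeWeight_prime z h q.prop.1]
  rw [tprod_congr hfactor, ← squarefreeWeight_of_squarefree z h hn,
    tsum_ite_dvd_eq_tsum_mul _ hn.ne_zero]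
  exact (isMultiplicative_squarefreeWeight z h).tsum_apply_mul_eq_mul_tprod
    (fun _ => squarefreeWeight_eq_zero_of_not_squarefree z h)
    (summable_norm_squarefreeWeight z h hz hh) n
end
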